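/- (Flagged Jacobi–Trudi identity, general linear case.) Let n ≥ 1, let R be a commutative ring, let x_1, …, x_n ∈ R, let a = (a_1, a_2, …) be a sequence in R, and let λ = (λ_1 ≥ … ≥ λ_n ≥ 0) be a partition with at most n parts. Then det_{1≤i,j≤n} ( (x_i|a)^{λ_j+n−j} ) = ∏_{1≤i<j≤n}(x_i − x_j) · det_{1≤i,j≤n} ( h^{gl}_{λ_j−j+i}(x^{(i)}|a) ), where x^{(i)} := (x_i, x_{i+1}, …, x_n). -/

import Mathlib

open Finset

noncomputable def geom {R : Type*} [CommRing R] (x : R) : PowerSeries R :=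
  PowerSeries.mk fun k => x ^ k

noncomputable def lin {R : Type*} [CommRing R] (a : R) : PowerSeries R :=
  1 + PowerSeries.C a * PowerSeries.X

noncomputable def facpow {R : Type*} [CommRing R] (x : R) (a : ℕ → R) (m : ℕ) : R :=
  ∏ j ∈ Finset.range m, (x + a (j + 1))

noncomputable def hgl {R : Type*} [CommRing R] {n : ℕ} (x : Fin n → R) (a : ℕ → R) (m : ℤ) : R :=
  if 0 ≤ m then
    PowerSeries.coeff m.toNat
      ((∏ i, geom (x i)) * ∏ j ∈ Finset.range (n + m.toNat - 1), lin (a (j + 1)))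
  else 0

noncomputable def hsp {R : Type*} [CommRing R] {n : ℕ} (x : Fin n → Rˣ) (a : ℕ → R) (m : ℤ) : R :=
  if 0 ≤ m then
    PowerSeries.coeff m.toNat
      ((∏ i, geom ((x i : R)) * geom (((x i)⁻¹ : Rˣ) : R)) *
        ∏ j ∈ Finset.range (n + m.toNat - 1), lin (a (j + 1)))
  else 0

noncomputable def hoo {R : Type*} [CommRing R] {n : ℕ} (x : Fin n → Rˣ) (a : ℕ → R) (m : ℤ) : R :=
  if 0 ≤ m then
    PowerSeries.coeff m.toNat
      ((1 + PowerSeries.X) * (∏ i, geom ((x i : R)) * geom (((x i)⁻¹ : Rˣ) : R)) *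
        ∏ j ∈ Finset.range (n + m.toNat - 1), lin (a (j + 1)))
  else 0

noncomputable def heo {R : Type*} [CommRing R] {n : ℕ} (x : Fin n → Rˣ) (a : ℕ → R) (m : ℤ) : R :=
  if 0 ≤ m then
    if h : n = 1 then
      (PowerSeries.coeff m.toNat
        ((geom ((x ⟨0, by omega⟩ : Rˣ) : R) + geom (((x ⟨0, by omega⟩)⁻¹ : Rˣ) : R)) *
          ∏ j ∈ Finset.range m.toNat, lin (a (j + 1))))
        - (if m = 0 then 1 else 0)
    else
      PowerSeries.coeff m.toNat
        ((1 - PowerSeries.X ^ 2) * (∏ i, geom ((x i : R)) * geom (((x i)⁻¹ : Rˣ) : R)) *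
          ∏ j ∈ Finset.range (n + m.toNat - 1), lin (a (j + 1)))
  else 0

noncomputable def heod {R : Type*} [CommRing R] {n : ℕ} (x : Fin n → Rˣ) (a : ℕ → R) (m : ℤ) : R :=
  if 0 < m then
    if h : 0 < n then
      PowerSeries.coeff m.toNat
        ((geom ((x ⟨0, h⟩ : Rˣ) : R) - geom (((x ⟨0, h⟩)⁻¹ : Rˣ) : R)) *
          (∏ i ∈ Finset.univ.filter (fun i : Fin n => i ≠ ⟨0, h⟩),
            geom ((x i : R)) * geom (((x i)⁻¹ : Rˣ) : R)) *
          ∏ j ∈ Finset.range (n + m.toNat - 1), lin (a (j + 1)))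
    else 0
  else 0

/-!
Fix a column `j` and put `p = λ_j + n - j`. Since `(z|a)^p = ∑_r e_{p-r}(a_1, …, a_p) z^r` and the
divided difference of `z ↦ z^r` at the nodes `x_k, …, x_n` is `h_{r-n+k}(x_k, …, x_n)`, the divided
difference of `z ↦ (z|a)^p` at these nodes is the coefficient of `t^{λ_j-j+k}` in
`∏_{l≥k} (1 - t x_l)⁻¹ ∏_{m≤p} (1 + t a_m)`, that is `h^{gl}_{λ_j-j+k}(x^{(k)}|a)`. Newton's
interpolation formula with the nodes taken in the order `x_n, …, x_1`, evaluated at the node `x_i`,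
reads `(x_i|a)^p = ∑_k ∏_{l>k} (x_i - x_l) · h^{gl}_{λ_j-j+k}(x^{(k)}|a)`. So the left-hand matrix is
the upper triangular matrix `(∏_{l>k} (x_i - x_l))_{i,k}` times the flagged matrix.
-/

open PowerSeries

noncomputable section

variable {R : Type*} [CommRing R]

section Newton

variable {ι : Type*}

def IsDividedDifference [DecidableEq ι] (y : ι → R) (g : Finset ι → R) : Prop :=
  ∀ S s u, s ∉ S → u ∉ S → s ≠ u →
    (y s - y u) * g (insert s (insert u S)) = g (insert s S) - g (insert u S)

theorem IsDividedDifference.newton_expansion [LinearOrder ι] {y : ι → R} {g : Finset ι → R}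
    (hg : IsDividedDifference y g) (i : ι) (T : Finset ι) :
    g {i} = ∑ k ∈ T, (∏ l ∈ T with k < l, (y i - y l)) * g {l ∈ T | k ≤ l}
      + (∏ l ∈ T, (y i - y l)) * g (insert i T) := by
  induction T using Finset.induction_on_min with
  | empty => simp
  | insert c T hc ih =>
    have hcT : c ∉ T := fun h => lt_irrefl c (hc c h)
    have hterms : ∀ k ∈ T, (∏ l ∈ insert c T with k < l, (y i - y l)) * g {l ∈ insert c T | k ≤ l}
        = (∏ l ∈ T with k < l, (y i - y l)) * g {l ∈ T | k ≤ l} := fun k hk => by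
      have hck : ¬ k ≤ c := not_le.2 (hc k hk)
      rw [filter_insert, if_neg (mt le_of_lt hck), filter_insert, if_neg hck]
    have hc_lt : {l ∈ insert c T | c < l} = T := by
      rw [filter_insert, if_neg (lt_irrefl c), filter_true_of_mem hc]
    have hc_le : {l ∈ insert c T | c ≤ l} = insert c T :=
      filter_true_of_mem fun l hl => (mem_insert.1 hl).elim ge_of_eq fun h => (hc l h).le
    have hstep : (∏ l ∈ T, (y i - y l)) * g (insert c T)
        + (y i - y c) * (∏ l ∈ T, (y i - y l)) * g (insert i (insert c T))
        = (∏ l ∈ T, (y i - y l)) * g (insert i T) := by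
      by_cases hi : i ∈ insert c T
      · rcases mem_insert.1 hi with rfl | hiT
        · simp
        · simp [prod_eq_zero (f := fun l => y i - y l) hiT (sub_self _)]
      · have hic : i ≠ c := fun h => hi (h ▸ mem_insert_self i T)
        linear_combination (∏ l ∈ T, (y i - y l)) *
          hg T i c (fun h => hi (mem_insert_of_mem h)) hcT hic
    rw [sum_insert hcT, sum_congr rfl hterms, hc_lt, hc_le, prod_insert hcT, ih]
    linear_combination (-1 : R) * hstep

theorem IsDividedDifference.newton_expansion_univ [Fintype ι] [LinearOrder ι]
    [LocallyFiniteOrderTop ι] {y : ι → R} {g : Finset ι → R} (hg : IsDividedDifference y g)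
    (i : ι) : g {i} = ∑ k, (∏ l ∈ Ioi k, (y i - y l)) * g (Ici k) := by
  rw [hg.newton_expansion i univ,
    prod_eq_zero (f := fun l => y i - y l) (mem_univ i) (sub_self _), zero_mul, add_zero]
  simp only [filter_lt_eq_Ioi, filter_le_eq_Ici]

theorem det_prod_Ioi_sub [Fintype ι] [LinearOrder ι] [LocallyFiniteOrderTop ι] (y : ι → R) :
    (Matrix.of fun i k => ∏ l ∈ Ioi k, (y i - y l)).det = ∏ i, ∏ l ∈ Ioi i, (y i - y l) :=
  Matrix.det_of_isUpperTriangular fun _ _ hki =>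
    prod_eq_zero (f := fun l => _ - y l) (mem_Ioi.2 hki) (sub_self _)

end Newton

section GeneratingFunctions

lemma geom_eq_one_add (x : R) : geom x = 1 + C x * X * geom x := by
  ext (_ | k)
  · simp [geom]
  · rw [map_add, mul_comm (C x), mul_assoc, coeff_succ_X_mul, coeff_C_mul]
    simp [geom, pow_succ, mul_comm]

lemma geom_sub_geom (x y : R) : geom x - geom y = C (x - y) * X * (geom x * geom y) := by
  rw [map_sub]
  linear_combination geom y * geom_eq_one_add x - geom x * geom_eq_one_add y

def intCoeff (r : ℤ) : R⟦X⟧ →ₗ[R] R := if 0 ≤ r then coeff r.toNat else 0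

lemma intCoeff_natCast (n : ℕ) (f : R⟦X⟧) : intCoeff n f = coeff n f := by
  simp [intCoeff]

lemma intCoeff_of_neg {r : ℤ} (hr : r < 0) (f : R⟦X⟧) : intCoeff r f = 0 := by
  simp [intCoeff, not_le.2 hr]

lemma intCoeff_X_mul (r : ℤ) (f : R⟦X⟧) : intCoeff (r + 1) (X * f) = intCoeff r f := by
  rcases lt_trichotomy r (-1) with hr | rfl | hr
  · rw [intCoeff_of_neg (by omega), intCoeff_of_neg (by omega)]
  · simp [intCoeff]
  · lift r to ℕ using (by omega)
    rw [← Nat.cast_succ, intCoeff_natCast, intCoeff_natCast, coeff_succ_X_mul]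

def esymmSeries (a : ℕ → R) (p : ℕ) : R⟦X⟧ := ∏ j ∈ range p, lin (a (j + 1))

lemma coeff_add_geom_mul_esymmSeries (y : R) (a : ℕ → R) (q n : ℕ) :
    coeff (n + q) (geom y * esymmSeries a q) = y ^ n * facpow y a q := by
  induction q generalizing n with
  | zero => simp [geom, esymmSeries, facpow]
  | succ q ih =>
    have hsucc : geom y * esymmSeries a (q + 1)
        = geom y * esymmSeries a q + C (a (q + 1)) * (X * (geom y * esymmSeries a q)) := by
      rw [esymmSeries, prod_range_succ, ← esymmSeries, lin]
      ring
    rw [hsucc, map_add, coeff_C_mul, ← add_assoc, coeff_succ_X_mul,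
      show n + q + 1 = (n + 1) + q by omega, ih, ih, facpow, facpow, prod_range_succ]
    ring

lemma coeff_geom_mul_esymmSeries (y : R) (a : ℕ → R) (p : ℕ) :
    coeff p (geom y * esymmSeries a p) = facpow y a p := by
  simpa using coeff_add_geom_mul_esymmSeries y a p 0

end GeneratingFunctions

section DividedDifferences

variable {ι : Type*}

def facpowDivDiff (y : ι → R) (a : ℕ → R) (p : ℕ) (S : Finset ι) : R :=
  intCoeff ((p : ℤ) + 1 - #S) ((∏ s ∈ S, geom (y s)) * esymmSeries a p)

lemma facpowDivDiff_singleton (y : ι → R) (a : ℕ → R) (p : ℕ) (i : ι) :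
    facpowDivDiff y a p {i} = facpow (y i) a p := by
  simp [facpowDivDiff, intCoeff_natCast, coeff_geom_mul_esymmSeries]

lemma isDividedDifference_facpowDivDiff [DecidableEq ι] (y : ι → R) (a : ℕ → R) (p : ℕ) :
    IsDividedDifference y (facpowDivDiff y a p) := by
  intro S s u hs hu hsu
  set F := (∏ l ∈ S, geom (y l)) * esymmSeries a p
  have hsplit : ∀ v, v ∉ S → (∏ l ∈ insert v S, geom (y l)) * esymmSeries a p = geom (y v) * F :=
    fun v hv => by rw [prod_insert hv, mul_assoc]
  have hss : (∏ l ∈ insert s (insert u S), geom (y l)) * esymmSeries a p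
      = geom (y s) * (geom (y u) * F) := by
    rw [prod_insert (by simp [hs, hsu]), mul_assoc, hsplit u hu]
  have hX : C (y s - y u) * X * (geom (y s) * geom (y u)) * F
      = (y s - y u) • (X * (geom (y s) * (geom (y u) * F))) := by
    rw [smul_eq_C_mul]
    ring
  rw [facpowDivDiff, facpowDivDiff, facpowDivDiff, hss, hsplit s hs, hsplit u hu,
    card_insert_of_notMem (by simp [hs, hsu] : s ∉ insert u S), card_insert_of_notMem hs,
    card_insert_of_notMem hu, ← map_sub, ← sub_mul, geom_sub_geom, hX, map_smul, smul_eq_mul,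
    show (p : ℤ) + 1 - ↑(#S + 1) = (p + 1 - ↑(#S + 1 + 1)) + 1 by push_cast; ring,
    intCoeff_X_mul]

end DividedDifferences

theorem Fin.prod_Ici_eq_prod_univ {M : Type*} [CommMonoid M] {n : ℕ} (f : Fin n → M)
    (k : Fin n) : ∏ l ∈ Ici k, f l = ∏ t : Fin (n - k), f ⟨k + t, by omega⟩ := by
  refine prod_bij' (fun l _ => ⟨l - k, by omega⟩) (fun t _ => ⟨k + t, by omega⟩) ?_ ?_ ?_ ?_ ?_
    <;> simp only [mem_Ici, mem_univ, Fin.le_def, Fin.ext_iff]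
    <;> intro l hl
  · trivial
  · omega
  · omega
  · omega
  · exact congrArg f (Fin.ext (by dsimp only; omega))

lemma hgl_eq_intCoeff {N : ℕ} (x : Fin N → R) (a : ℕ → R) (m : ℤ) :
    hgl x a m = intCoeff m ((∏ i, geom (x i)) * esymmSeries a (N + m.toNat - 1)) := by
  unfold hgl intCoeff esymmSeries
  split_ifs <;> rfl

lemma hgl_tail_eq_facpowDivDiff {n : ℕ} (x : Fin n → R) (a : ℕ → R) (p : ℕ) (k : Fin n) :
    hgl (fun t : Fin (n - k) => x ⟨k + t, by omega⟩) a ((p : ℤ) + 1 - (n - k : ℕ))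
      = facpowDivDiff x a p (Ici k) := by
  rw [hgl_eq_intCoeff, facpowDivDiff, Fin.card_Ici,
    ← Fin.prod_Ici_eq_prod_univ (fun l => geom (x l))]
  rcases le_or_gt 0 ((p : ℤ) + 1 - (n - k : ℕ)) with hm | hm
  · congr 3
    omega
  · rw [intCoeff_of_neg hm, intCoeff_of_neg hm]

theorem facpow_matrix_eq_mul_hgl_matrix {n : ℕ} (x : Fin n → R) (a : ℕ → R) (e : Fin n → ℕ) :
    Matrix.of (fun i j => facpow (x i) a (e j))
      = Matrix.of (fun i k => ∏ l ∈ Ioi k, (x i - x l)) *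
        Matrix.of (fun (k j : Fin n) => hgl (fun t : Fin (n - k) => x ⟨k + t, by omega⟩) a
          ((e j : ℤ) + 1 - (n - k : ℕ))) := by
  ext i j
  simp only [Matrix.mul_apply, Matrix.of_apply, hgl_tail_eq_facpowDivDiff]
  rw [← (isDividedDifference_facpowDivDiff x a (e j)).newton_expansion_univ i,
    facpowDivDiff_singleton]

end

theorem flagged_jacobi_trudi_gl {R : Type*} [CommRing R] (n : ℕ)
    (x : Fin n → R) (a : ℕ → R) (lam : Fin n → ℕ) :
    Matrix.det (Matrix.of fun i j : Fin n =>
        facpow (x i) a (lam j + (n - 1 - (j : ℕ)))) =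
      (∏ i : Fin n, ∏ j ∈ Finset.Ioi i, (x i - x j)) *
        Matrix.det (Matrix.of fun i j : Fin n =>
          hgl (fun k : Fin (n - (i : ℕ)) =>
              x ⟨(i : ℕ) + (k : ℕ), by have := i.isLt; have := k.isLt; omega⟩) a
            ((lam j : ℤ) - (j : ℕ) + (i : ℕ))) := by
  have hidx : ∀ i j : Fin n,
      (lam j : ℤ) - j + i = ((lam j + (n - 1 - j) : ℕ) : ℤ) + 1 - (n - i : ℕ) := by
    omega
  simp_rw [hidx]
  rw [facpow_matrix_eq_mul_hgl_matrix, Matrix.det_mul, det_prod_Ioi_sub]
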